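/- arXiv:1711.10920 — 8 statements merged into one kernel-verified Lean document; each statement's English description precedes it below -/
import Mathlib

section
/- In the majority model on the cycle C_n, if some configuration contains a monochromatic pair of adjacent vertices of each color (a blue pair and a red pair), then the process reaches a fixed configuration (period one) in at most n/2 steps, and that final configuration is bichromatic. -/
/-!
Call a vertex *settled* when it lies in a monochromatic pair. A settled vertex keeps its color,
and one step later its two neighbours are settled as well: a neighbour that was not settled
sits between two vertices of the opposite color and flips. Hence after `k` steps every vertex
within distance `k` of the initial blue pair is settled; every vertex of `C_n` is within
distance `n / 2`, and a configuration in which every vertex is settled is fixed. The initial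
blue pair and red pair never change, so the fixed configuration uses both colors.
-/

/-- One synchronous step of the majority model on the cycle `C_n`: each vertex adopts the
most frequent color among its two neighbors, keeping its own color in case of a tie. -/
def cycStep (n : ℕ) (g : ZMod n → Bool) : ZMod n → Bool :=
  fun i => if g (i - 1) = g (i + 1) then g (i - 1) else g i

namespace CycStep

variable {n : ℕ} {f : ZMod n → Bool} {v : ZMod n}

def Settled (f : ZMod n → Bool) (v : ZMod n) : Prop :=
  f (v - 1) = f v ∨ f v = f (v + 1)

theorem cycStep_apply_of_settled (h : Settled f v) : cycStep n f v = f v := by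
  unfold cycStep
  split_ifs <;> rcases h with h | h <;> simp_all

theorem settled_add_one_of_eq (h : f v = f (v + 1)) : Settled f (v + 1) :=
  Or.inl (by rwa [add_sub_cancel_right])

theorem settled_cycStep (h : Settled f v) : Settled (cycStep n f) v := by
  rw [Settled, cycStep_apply_of_settled h]
  rcases h with h | h
  · left
    have h' : Settled f (v - 1) := Or.inr (by rwa [sub_add_cancel])
    rw [cycStep_apply_of_settled h', h]
  · right
    rw [cycStep_apply_of_settled (settled_add_one_of_eq h), h]

theorem settled_cycStep_add_one (h : Settled f v) : Settled (cycStep n f) (v + 1) := by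
  by_cases hc : f v = f (v + 1)
  · exact settled_cycStep (settled_add_one_of_eq hc)
  by_cases hd : f v = f (v + 1 + 1)
  · left
    rw [add_sub_cancel_right, cycStep_apply_of_settled h]
    simp only [cycStep, add_sub_cancel_right, if_pos hd]
  -- otherwise `f (v + 1)` and `f (v + 1 + 1)` both differ from `f v`, so they form a pair
  have hcd : f (v + 1) = f (v + 1 + 1) := by
    revert hc hd; cases f v <;> cases f (v + 1) <;> cases f (v + 1 + 1) <;> decide
  exact settled_cycStep (Or.inr hcd)

theorem cycStep_comp_neg (f : ZMod n → Bool) :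
    cycStep n (f ∘ Neg.neg) = cycStep n f ∘ Neg.neg := by
  funext i
  simp only [cycStep, Function.comp_apply, neg_sub', neg_add', sub_neg_eq_add]
  by_cases h : f (-i + 1) = f (-i - 1)
  · rw [if_pos h, if_pos h.symm, h]
  · rw [if_neg h, if_neg (Ne.symm h)]

theorem settled_comp_neg_iff : Settled (f ∘ Neg.neg) (-v) ↔ Settled f v := by
  simp only [Settled, Function.comp_apply, neg_sub', neg_add', sub_neg_eq_add, neg_neg]
  rw [or_comm, eq_comm, @eq_comm _ (f v)]

theorem settled_cycStep_sub_one (h : Settled f v) : Settled (cycStep n f) (v - 1) := by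
  have h' := settled_cycStep_add_one (settled_comp_neg_iff.mpr h)
  rwa [cycStep_comp_neg, show -v + 1 = -(v - 1) by abel, settled_comp_neg_iff] at h'


theorem settled_cycStep_add (h : Settled f v) {s : ℤ} (hs : s.natAbs ≤ 1) :
    Settled (cycStep n f) (v + s) := by
  obtain rfl | rfl | rfl : s = -1 ∨ s = 0 ∨ s = 1 := by omega
  · simpa [← sub_eq_add_neg] using settled_cycStep_sub_one h
  · simpa using settled_cycStep h
  · simpa using settled_cycStep_add_one h

theorem settled_iterate_cycStep_add (h : Settled f v) (k : ℕ) {j : ℤ} (hj : j.natAbs ≤ k) :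
    Settled ((cycStep n)^[k] f) (v + j) := by
  induction k generalizing j with
  | zero =>
    obtain rfl : j = 0 := by omega
    simpa using h
  | succ k ih =>
    set s := max (-1) (min 1 j)
    rw [Function.iterate_succ_apply',
      show v + (j : ZMod n) = v + ((j - s : ℤ) : ZMod n) + s by push_cast; ring]
    exact settled_cycStep_add (ih (by omega)) (by omega)

theorem settled_iterate_cycStep (h : Settled f v) (k : ℕ) : Settled ((cycStep n)^[k] f) v := by
  simpa using settled_iterate_cycStep_add h k (j := 0) (by simp)

theorem iterate_cycStep_apply_of_settled (h : Settled f v) (k : ℕ) :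
    (cycStep n)^[k] f v = f v := by
  induction k with
  | zero => rfl
  | succ k ih =>
    rw [Function.iterate_succ_apply',
      cycStep_apply_of_settled (settled_iterate_cycStep h k), ih]

theorem settled_iterate_cycStep_half [NeZero n] (h : Settled f v) (w : ZMod n) :
    Settled ((cycStep n)^[n / 2] f) w := by
  simpa using settled_iterate_cycStep_add h (n / 2) (ZMod.natAbs_valMinAbs_le (w - v))

theorem cycStep_eq_self_of_forall_settled (h : ∀ v, Settled f v) : cycStep n f = f :=
  funext fun v => cycStep_apply_of_settled (h v)

end CycStep

open CycStep

/-- If a configuration on `C_n` contains a blue pair and a red pair, then the majority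
process reaches a fixed configuration within `n/2` steps, and that fixed configuration
is bichromatic. -/
theorem stmt1 (n : ℕ) (hn : 3 ≤ n) (g : ZMod n → Bool)
    (hblue : ∃ i : ZMod n, g i = true ∧ g (i + 1) = true)
    (hred : ∃ i : ZMod n, g i = false ∧ g (i + 1) = false) :
    cycStep n ((cycStep n)^[n / 2] g) = (cycStep n)^[n / 2] g ∧
      (∃ v, (cycStep n)^[n / 2] g v = true) ∧
      (∃ v, (cycStep n)^[n / 2] g v = false) := by
  have : NeZero n := ⟨by omega⟩
  obtain ⟨b, hb, hb'⟩ := hblue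
  obtain ⟨r, hr, hr'⟩ := hred
  have hb_settled : Settled g b := Or.inr (hb.trans hb'.symm)
  have hr_settled : Settled g r := Or.inr (hr.trans hr'.symm)
  refine ⟨cycStep_eq_self_of_forall_settled (settled_iterate_cycStep_half hb_settled),
    ⟨b, ?_⟩, ⟨r, ?_⟩⟩
  · rw [iterate_cycStep_apply_of_settled hb_settled, hb]
  · rw [iterate_cycStep_apply_of_settled hr_settled, hr]
end

section
/- Let G=(V,E) be a graph and let V'_1,...,V'_k be pairwise disjoint b-eternal sets in the (biased) majority model, with s = max_j |V'_j|. If each vertex of G is independently colored blue with probability p_b in the initial generation, then the probability that the process ever reaches an all-red generation is at most exp(-k * p_b^s). -/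
/-! If some generation is all red, then every `A j` contained a red vertex initially: an
entirely blue `A j` is b-eternal and keeps a blue vertex alive forever. The `A j` are disjoint,
so under the product measure these events are independent, and each has probability
`1 - p ^ |A j| ≤ 1 - p ^ s ≤ exp (-p ^ s)`. -/

open scoped Classical

/-- Number of blue neighbors of `v`. -/
def blueCount {V : Type*} [Fintype V] [DecidableEq V] (G : SimpleGraph V)
    [DecidableRel G.Adj] (g : V → Bool) (v : V) : ℕ :=
  ((G.neighborFinset v).filter fun u => g u = true).card

/-- Number of red neighbors of `v`. -/
def redCount {V : Type*} [Fintype V] [DecidableEq V] (G : SimpleGraph V)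
    [DecidableRel G.Adj] (g : V → Bool) (v : V) : ℕ :=
  ((G.neighborFinset v).filter fun u => g u = false).card

/-- One synchronous step of the majority model: each vertex adopts the strict-majority
color of its neighborhood, keeping its current color in case of a tie. -/
def majStep {V : Type*} [Fintype V] [DecidableEq V] (G : SimpleGraph V)
    [DecidableRel G.Adj] (g : V → Bool) : V → Bool :=
  fun v =>
    if redCount G g v < blueCount G g v then true
    else if blueCount G g v < redCount G g v then false
    else g v

/-- One synchronous step of the biased majority model: ties become blue. -/
def bmajStep {V : Type*} [Fintype V] [DecidableEq V] (G : SimpleGraph V)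
    [DecidableRel G.Adj] (g : V → Bool) : V → Bool :=
  fun v => decide (redCount G g v ≤ blueCount G g v)

/-- Probability, under the product measure where each vertex is blue (`true`)
independently with probability `p`, of the event `E`. -/
noncomputable def pr {α : Type*} [Fintype α] [DecidableEq α] (p : ℝ)
    (E : (α → Bool) → Prop) : ℝ :=
  ∑ g : α → Bool, if E g then (∏ v, if g v = true then p else 1 - p) else 0


namespace BernoulliProduct

open Function

variable {α : Type*} [Fintype α] [DecidableEq α] {p : ℝ}

lemma pr_congr {E F : (α → Bool) → Prop} (h : ∀ g, E g ↔ F g) : pr p E = pr p F := by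
  simp only [pr, h]

lemma pr_mono (hp0 : 0 ≤ p) (hp1 : p ≤ 1) {E F : (α → Bool) → Prop} (h : ∀ g, E g → F g) :
    pr p E ≤ pr p F := by
  refine Finset.sum_le_sum fun g _ => ?_
  have hw : 0 ≤ ∏ v, if g v = true then p else 1 - p :=
    Finset.prod_nonneg fun v _ => by split_ifs <;> linarith
  split_ifs with hE hF
  · exact le_rfl
  · exact absurd (h g hE) hF
  · exact hw
  · exact le_rfl

lemma pr_forall_coord (P : α → Bool → Prop) :
    pr p (fun g => ∀ v, P v (g v)) =
      ∏ v, ∑ b, if P v b then (if b = true then p else 1 - p) else 0 := by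
  rw [pr, Fintype.prod_sum]
  exact Finset.sum_congr rfl fun g _ => by rw [Fintype.prod_ite_zero]; congr

lemma pr_true : pr p (fun _ : α → Bool => True) = 1 := by
  simpa using pr_forall_coord (p := p) fun (_ : α) (_ : Bool) => True

lemma pr_not (E : (α → Bool) → Prop) : pr p (fun g => ¬ E g) = 1 - pr p E := by
  rw [← pr_true (α := α) (p := p), eq_sub_iff_add_eq, pr, pr, pr, ← Finset.sum_add_distrib]
  refine Finset.sum_congr rfl fun g _ => ?_
  by_cases hE : E g <;> simp [hE]

lemma pr_forall_mem_eq_true (S : Finset α) :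
    pr p (fun g => ∀ v ∈ S, g v = true) = p ^ S.card := by
  rw [pr_forall_coord (fun v b => v ∈ S → b = true), ← Finset.prod_const, ← Finset.univ_inter S,
    ← Finset.prod_ite_mem]
  refine Finset.prod_congr rfl fun v _ => ?_
  by_cases hv : v ∈ S <;> simp [hv]

lemma pr_subtype_and (q : α → Prop) [DecidablePred q] (P : ({v // q v} → Bool) → Prop)
    (Q : ({v // ¬ q v} → Bool) → Prop) :
    pr p (fun g : α → Bool => P (fun v => g v) ∧ Q (fun v => g v)) = pr p P * pr p Q := by
  rw [pr, pr, pr, Finset.sum_mul_sum, ← Fintype.sum_prod_type']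
  refine Fintype.sum_equiv (Equiv.piEquivPiSubtypeProd q fun _ => Bool) _ _ fun g => ?_
  rw [ite_zero_mul_ite_zero, ← Fintype.prod_subtype_mul_prod_subtype q]
  congr

lemma pr_subtype (q : α → Prop) [DecidablePred q] (P : ({v // q v} → Bool) → Prop) :
    pr p (fun g : α → Bool => P (fun v => g v)) = pr p P := by
  simpa [pr_true] using pr_subtype_and (p := p) q P fun _ => True

lemma pr_subtype_compl (q : α → Prop) [DecidablePred q] (Q : ({v // ¬ q v} → Bool) → Prop) :
    pr p (fun g : α → Bool => Q (fun v => g v)) = pr p Q := by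
  simpa [pr_true] using pr_subtype_and (p := p) q (fun _ => True) Q

lemma pr_and_of_dependsOn {S : Set α} {E F : (α → Bool) → Prop} (hE : DependsOn E S)
    (hF : DependsOn F Sᶜ) : pr p (fun g => E g ∧ F g) = pr p E * pr p F := by
  set e := Equiv.piEquivPiSubtypeProd (· ∈ S) fun _ : α => Bool
  have hE' : ∀ g, E g ↔ E (e.symm ((e g).1, fun _ => true)) := fun g => by
    rw [hE fun v hv => ?_]
    simp [e, Equiv.piEquivPiSubtypeProd, hv]
  have hF' : ∀ g, F g ↔ F (e.symm (fun _ => true, (e g).2)) := fun g => by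
    rw [hF fun v hv => ?_]
    simp [e, Equiv.piEquivPiSubtypeProd, show v ∉ S from hv]
  calc pr p (fun g => E g ∧ F g)
      = pr p (fun g : α → Bool => E (e.symm ((e g).1, fun _ => true)) ∧
          F (e.symm (fun _ => true, (e g).2))) := pr_congr fun g => and_congr (hE' g) (hF' g)
    _ = pr p (fun a => E (e.symm (a, fun _ => true))) *
          pr p (fun b => F (e.symm (fun _ => true, b))) :=
        pr_subtype_and (· ∈ S) (fun a => E (e.symm (a, fun _ => true)))
          (fun b => F (e.symm (fun _ => true, b)))
    _ = pr p E * pr p F := by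
      rw [← pr_subtype (· ∈ S), ← pr_subtype_compl (· ∈ S)]
      exact congrArg₂ (· * ·) (pr_congr hE').symm (pr_congr hF').symm

lemma pr_forall_mem_of_dependsOn {ι : Type*} {A : ι → Set α} {E : ι → (α → Bool) → Prop}
    (hE : ∀ i, DependsOn (E i) (A i)) (I : Finset ι) (hA : (I : Set ι).PairwiseDisjoint A) :
    pr p (fun g => ∀ i ∈ I, E i g) = ∏ i ∈ I, pr p (E i) := by
  induction I using Finset.induction_on with
  | empty => simpa using pr_true
  | insert i I hi ih =>
    have hrest : DependsOn (fun g => ∀ j ∈ I, E j g) (A i)ᶜ := fun x y hxy =>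
      propext <| forall₂_congr fun j hj => by
        refine (hE j fun v hv => hxy v ?_).to_iff
        have hij : Disjoint (A i) (A j) :=
          hA (by simp) (by simp [hj]) (ne_of_mem_of_not_mem hj hi).symm
        exact Set.disjoint_right.mp hij hv
    rw [Finset.prod_insert hi, ← ih (hA.subset (by simp)), ← pr_and_of_dependsOn (hE i) hrest]
    exact pr_congr fun g => Finset.forall_mem_insert ..

lemma pr_forall_exists_mem_eq_false {ι : Type*} [Fintype ι] (A : ι → Finset α)
    (hA : Pairwise (Disjoint on A)) :
    pr p (fun g => ∀ i, ∃ v ∈ A i, g v = false) = ∏ i, (1 - p ^ (A i).card) := by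
  have hE : ∀ i, DependsOn (fun g : α → Bool => ∃ v ∈ A i, g v = false) (A i) := by
    refine fun i x y hxy => propext <| exists_congr fun v => and_congr_right fun hv => ?_
    rw [hxy v hv]
  calc pr p (fun g => ∀ i, ∃ v ∈ A i, g v = false)
      = pr p (fun g => ∀ i ∈ Finset.univ, ∃ v ∈ A i, g v = false) := pr_congr fun g => by simp
    _ = ∏ i, pr p (fun g : α → Bool => ∃ v ∈ A i, g v = false) :=
        pr_forall_mem_of_dependsOn hE _ fun i _ j _ hij => Finset.disjoint_coe.mpr (hA hij)
    _ = ∏ i, (1 - p ^ (A i).card) := Finset.prod_congr rfl fun i _ => by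
        rw [← pr_forall_mem_eq_true, ← pr_not]
        exact pr_congr fun g => by simp

end BernoulliProduct

open BernoulliProduct

theorem stmt3_general {V : Type*} [Fintype V] [DecidableEq V]
    (step : (V → Bool) → (V → Bool))
    (k s : ℕ) (A : Fin k → Finset V)
    (hdisj : ∀ i j : Fin k, i ≠ j → Disjoint (A i) (A j))
    (hs : s = Finset.univ.sup fun j : Fin k => (A j).card)
    (heternal : ∀ j : Fin k, ∀ g : V → Bool, (∀ v ∈ A j, g v = true) →
      ∀ t : ℕ, ∃ v, (step^[t] g) v = true)
    (p : ℝ) (hp0 : 0 ≤ p) (hp1 : p ≤ 1) :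
    pr p (fun g => ∃ t : ℕ, ∀ v, (step^[t] g) v = false) ≤
      Real.exp (-(k : ℝ) * p ^ s) := by
  have hred : ∀ g : V → Bool, (∃ t : ℕ, ∀ v, (step^[t] g) v = false) →
      ∀ j, ∃ v ∈ A j, g v = false := by
    rintro g ⟨t, hallRed⟩ j
    by_contra! hblue
    obtain ⟨v, hv⟩ := heternal j g (fun v hv => by simpa using hblue v hv) t
    simp [hallRed v] at hv
  calc pr p (fun g => ∃ t : ℕ, ∀ v, (step^[t] g) v = false)
      ≤ pr p (fun g => ∀ j, ∃ v ∈ A j, g v = false) := pr_mono hp0 hp1 hred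
    _ = ∏ j, (1 - p ^ (A j).card) := pr_forall_exists_mem_eq_false A hdisj
    _ ≤ ∏ _j : Fin k, (1 - p ^ s) := by
        refine Finset.prod_le_prod (fun j _ => sub_nonneg.mpr (pow_le_one₀ hp0 hp1))
          fun j _ => sub_le_sub_left (pow_le_pow_of_le_one hp0 hp1 ?_) 1
        exact hs ▸ Finset.le_sup (f := fun j => (A j).card) (Finset.mem_univ j)
    _ = (1 - p ^ s) ^ k := by rw [Finset.prod_const, Finset.card_fin]
    _ ≤ Real.exp (-p ^ s) ^ k :=
        pow_le_pow_left₀ (sub_nonneg.mpr (pow_le_one₀ hp0 hp1)) (Real.one_sub_le_exp_neg _) k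
    _ = Real.exp (-(k : ℝ) * p ^ s) := by rw [← Real.exp_nat_mul]; ring_nf

/-- If `V'_1, …, V'_k` are pairwise disjoint b-eternal sets in the (biased) majority
model and `s = max_j |V'_j|`, then under the random initial coloring the probability
that the process ever reaches an all-red generation is at most `exp(-k p_b^s)`. -/
theorem stmt3 {V : Type*} [Fintype V] [DecidableEq V] (G : SimpleGraph V)
    [DecidableRel G.Adj] (step : (V → Bool) → (V → Bool))
    (hstep : step = majStep G ∨ step = bmajStep G)
    (k s : ℕ) (A : Fin k → Finset V)
    (hdisj : ∀ i j : Fin k, i ≠ j → Disjoint (A i) (A j))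
    (hs : s = Finset.univ.sup fun j : Fin k => (A j).card)
    (heternal : ∀ j : Fin k, ∀ g : V → Bool, (∀ v ∈ A j, g v = true) →
      ∀ t : ℕ, ∃ v, (step^[t] g) v = true)
    (p : ℝ) (hp0 : 0 ≤ p) (hp1 : p ≤ 1) :
    pr p (fun g => ∃ t : ℕ, ∀ v, (step^[t] g) v = false) ≤
      Real.exp (-(k : ℝ) * p ^ s) :=
  stmt3_general step k s A hdisj hs heternal p hp0 hp1
end

section
/- Let G=(V,E) with |V|=n and let V'_1,...,V'_k be (not necessarily disjoint) b-eternal sets, s = max_j |V'_j|, and for each vertex v_i let a_i be the number of sets V'_j containing v_i. Under independent random initial coloring with blue-probability p_b, the probability that the process reaches an all-red generation is at most exp(-k^2 p_b^{2s} / (2 * sum_i a_i^2)). -/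
open scoped Classical

/-!
Let `X g` count the eternal sets that are entirely blue in the initial colouring `g`. If the
process ever becomes all red, no eternal set was blue at the start, so `X = 0`; on the other hand
`𝔼 X = ∑ⱼ p ^ |A j| ≥ k p ^ s`. Recolouring a vertex `v` changes `X` by at most `a v`, so
McDiarmid's bounded-differences inequality bounds `P(X ≤ 𝔼 X - k p ^ s)` by
`exp (-(k p ^ s)² / (2 ∑ᵥ a v ²))`. McDiarmid's inequality itself is proved on the Boolean cube
with the Doob martingale that averages out the coordinates one at a time: each increment is a
centred two-point variable bounded by the bounded-difference constant of its coordinate, so its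
moment generating function is controlled by Hoeffding's lemma.
-/

open Function Real

section Resample

variable {V : Type*} [DecidableEq V] {p : ℝ}

noncomputable def resample (p : ℝ) (v : V) (f : (V → Bool) → ℝ) (g : V → Bool) : ℝ :=
  p * f (update g v true) + (1 - p) * f (update g v false)

/-- `resampleList p l f g` is the conditional expectation of `f` given the coordinates of `g`
outside `l`. -/
noncomputable def resampleList (p : ℝ) (l : List V) (f : (V → Bool) → ℝ) : (V → Bool) → ℝ :=
  l.foldr (resample p) f

theorem resampleList_cons (v : V) (l : List V) (f : (V → Bool) → ℝ) :
    resampleList p (v :: l) f = resample p v (resampleList p l f) :=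
  rfl

theorem resampleList_congr (l : List V) (f : (V → Bool) → ℝ) {g g' : V → Bool}
    (h : ∀ v ∉ l, g v = g' v) : resampleList p l f g = resampleList p l f g' := by
  induction l generalizing g g' with
  | nil => rw [funext fun v => h v List.not_mem_nil]
  | cons v l ih =>
    have hupd (b : Bool) : resampleList p l f (update g v b) = resampleList p l f (update g' v b) :=
      ih fun u hu => by
        by_cases huv : u = v
        · simp [huv]
        · simp [update_of_ne huv, h u (by simp [huv, hu])]
    simp only [resampleList_cons, resample, hupd]

theorem resampleList_const_mul (l : List V) (a : ℝ) (f : (V → Bool) → ℝ) :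
    resampleList p l (fun x => a * f x) = fun g => a * resampleList p l f g := by
  induction l with
  | nil => rfl
  | cons v l ih =>
    funext g
    rw [resampleList_cons, ih]
    simp only [resampleList_cons, resample]
    ring

theorem resampleList_mono (hp0 : 0 ≤ p) (hp1 : p ≤ 1) (l : List V) {f f' : (V → Bool) → ℝ}
    (h : ∀ x, f x ≤ f' x) (g : V → Bool) : resampleList p l f g ≤ resampleList p l f' g := by
  induction l generalizing g with
  | nil => exact h g
  | cons v l ih =>
    simp only [resampleList_cons, resample]
    gcongr <;> exact ih _

theorem abs_resample_update_sub_le (hp0 : 0 ≤ p) (hp1 : p ≤ 1) {u v : V} (huv : u ≠ v)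
    {f : (V → Bool) → ℝ} {c : ℝ} (hf : ∀ g, |f (update g v true) - f (update g v false)| ≤ c)
    (g : V → Bool) :
    |resample p u f (update g v true) - resample p u f (update g v false)| ≤ c := by
  have hcomm (b b' : Bool) : update (update g v b) u b' = update (update g u b') v b :=
    update_comm huv.symm b b' g
  calc |resample p u f (update g v true) - resample p u f (update g v false)|
      = |p * (f (update (update g u true) v true) - f (update (update g u true) v false))
          + (1 - p) * (f (update (update g u false) v true)
            - f (update (update g u false) v false))| := by
        simp only [resample, hcomm]
        ring_nf
    _ ≤ p * c + (1 - p) * c := by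
        refine (abs_add_le _ _).trans ?_
        rw [abs_mul, abs_mul, abs_of_nonneg hp0, abs_of_nonneg (by linarith : 0 ≤ 1 - p)]
        gcongr <;> exact hf _
    _ = c := by ring

theorem abs_resampleList_update_sub_le (hp0 : 0 ≤ p) (hp1 : p ≤ 1) {l : List V} {v : V}
    (hv : v ∉ l) {f : (V → Bool) → ℝ} {c : ℝ}
    (hf : ∀ g, |f (update g v true) - f (update g v false)| ≤ c) (g : V → Bool) :
    |resampleList p l f (update g v true) - resampleList p l f (update g v false)| ≤ c := by
  induction l generalizing g with
  | nil => exact hf g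
  | cons u l ih =>
    rw [List.mem_cons, not_or] at hv
    exact abs_resample_update_sub_le hp0 hp1 (Ne.symm hv.1) (ih hv.2) g

end Resample

section BoolCube

variable {V : Type*} [Fintype V] {p : ℝ}

noncomputable def cubeWeight (p : ℝ) (g : V → Bool) : ℝ :=
  ∏ v, if g v = true then p else 1 - p

theorem cubeWeight_nonneg (hp0 : 0 ≤ p) (hp1 : p ≤ 1) (g : V → Bool) : 0 ≤ cubeWeight p g :=
  Finset.prod_nonneg fun v _ => by split <;> linarith

variable [DecidableEq V]

noncomputable def cubeExp (p : ℝ) (f : (V → Bool) → ℝ) : ℝ :=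
  ∑ g, cubeWeight p g * f g

theorem pr_eq_sum_cubeWeight (E : (V → Bool) → Prop) :
    pr p E = ∑ g, if E g then cubeWeight p g else 0 :=
  rfl

theorem cubeExp_sum {ι : Type*} [Fintype ι] (p : ℝ) (F : ι → (V → Bool) → ℝ) :
    cubeExp p (fun g => ∑ j, F j g) = ∑ j, cubeExp p (F j) := by
  simp only [cubeExp, Finset.mul_sum]
  exact Finset.sum_comm

theorem cubeExp_prod (p : ℝ) (φ : V → Bool → ℝ) :
    cubeExp p (fun g => ∏ v, φ v (g v)) = ∏ v, (p * φ v true + (1 - p) * φ v false) := by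
  simp only [cubeExp, cubeWeight, ← Finset.prod_mul_distrib]
  rw [← Fintype.prod_sum fun v (b : Bool) => (if b = true then p else 1 - p) * φ v b]
  simp

theorem sum_cubeWeight (p : ℝ) : ∑ g : V → Bool, cubeWeight p g = 1 := by
  simpa [cubeExp] using cubeExp_prod (V := V) p fun _ _ => 1

theorem cubeExp_const (p c : ℝ) : cubeExp p (fun _ : V → Bool => c) = c := by
  rw [cubeExp, ← Finset.sum_mul, sum_cubeWeight, one_mul]

theorem sum_cube_eq_sum_funSplitAt (v : V) (F : (V → Bool) → ℝ) :
    ∑ g, F g = ∑ b : Bool, ∑ h : {u // u ≠ v} → Bool,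
      F ((Equiv.funSplitAt v Bool).symm (b, h)) := by
  rw [← Fintype.sum_prod_type', (Equiv.funSplitAt v Bool).symm.sum_comp]

theorem cubeWeight_funSplitAt_symm (v : V) (b : Bool) (h : {u // u ≠ v} → Bool) :
    cubeWeight p ((Equiv.funSplitAt v Bool).symm (b, h))
      = (if b = true then p else 1 - p) * ∏ u, if h u = true then p else 1 - p := by
  rw [cubeWeight, Fintype.prod_eq_mul_prod_subtype_ne _ v]
  congr 1
  · simp [Equiv.funSplitAt, Equiv.piSplitAt]
  · exact Finset.prod_congr rfl fun u _ => by simp [Equiv.funSplitAt, Equiv.piSplitAt, u.2]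

theorem cubeExp_resample (v : V) (f : (V → Bool) → ℝ) :
    cubeExp p (resample p v f) = cubeExp p f := by
  have hupdate (b c : Bool) (h : {u // u ≠ v} → Bool) :
      update ((Equiv.funSplitAt v Bool).symm (b, h)) v c
        = (Equiv.funSplitAt v Bool).symm (c, h) := by
    ext u
    by_cases hu : u = v <;> simp [Equiv.funSplitAt, Equiv.piSplitAt, hu]
  simp only [cubeExp, resample, sum_cube_eq_sum_funSplitAt v, cubeWeight_funSplitAt_symm,
    hupdate, Fintype.sum_bool, if_true, Bool.false_eq_true, if_false]
  rw [← Finset.sum_add_distrib, ← Finset.sum_add_distrib]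
  exact Finset.sum_congr rfl fun h _ => by ring

theorem cubeExp_resampleList (l : List V) (f : (V → Bool) → ℝ) :
    cubeExp p (resampleList p l f) = cubeExp p f := by
  induction l with
  | nil => rfl
  | cons v l ih => rw [resampleList_cons, cubeExp_resample, ih]

theorem resampleList_univ (f : (V → Bool) → ℝ) (g : V → Bool) :
    resampleList p Finset.univ.toList f g = cubeExp p f :=
  calc resampleList p Finset.univ.toList f g
      = cubeExp p (fun _ => resampleList p Finset.univ.toList f g) := (cubeExp_const _ _).symm
    _ = cubeExp p (resampleList p Finset.univ.toList f) :=
      congrArg _ (funext fun _ => resampleList_congr _ _ fun v hv => absurd (by simp) hv)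
    _ = cubeExp p f := cubeExp_resampleList _ _

end BoolCube

section Hoeffding

theorem exp_mul_le_chord {c : ℝ} (hc : 0 < c) (t : ℝ) {x : ℝ} (hx : |x| ≤ c) :
    exp (t * x) ≤ (c - x) / (2 * c) * exp (-(t * c)) + (c + x) / (2 * c) * exp (t * c) := by
  obtain ⟨hxl, hxr⟩ := abs_le.1 hx
  have hconv := convexOn_exp.2 (Set.mem_univ (-(t * c))) (Set.mem_univ (t * c))
    (div_nonneg (by linarith) (by linarith) : 0 ≤ (c - x) / (2 * c))
    (div_nonneg (by linarith) (by linarith) : 0 ≤ (c + x) / (2 * c))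
    (by field_simp; ring)
  simp only [smul_eq_mul] at hconv
  refine (congrArg exp ?_).trans_le hconv
  field_simp
  ring

theorem two_point_mgf_le {p x y c : ℝ} (hp0 : 0 ≤ p) (hp1 : p ≤ 1)
    (hmean : p * x + (1 - p) * y = 0) (hx : |x| ≤ c) (hy : |y| ≤ c) (t : ℝ) :
    p * exp (t * x) + (1 - p) * exp (t * y) ≤ exp ((t * c) ^ 2 / 2) := by
  rcases (abs_nonneg x |>.trans hx).eq_or_lt with hc | hc
  · rw [← hc, abs_nonpos_iff] at hx hy
    simp [hx, hy]
    positivity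
  calc p * exp (t * x) + (1 - p) * exp (t * y)
      ≤ p * ((c - x) / (2 * c) * exp (-(t * c)) + (c + x) / (2 * c) * exp (t * c))
        + (1 - p) * ((c - y) / (2 * c) * exp (-(t * c)) + (c + y) / (2 * c) * exp (t * c)) := by
        gcongr
        · exact exp_mul_le_chord hc t hx
        · exact exp_mul_le_chord hc t hy
    _ = cosh (t * c) := by
        rw [cosh_eq]
        generalize exp (t * c) = B
        generalize exp (-(t * c)) = A
        field_simp
        linear_combination (B - A) * hmean
    _ ≤ exp ((t * c) ^ 2 / 2) := cosh_le_exp_half_sq _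

end Hoeffding

section McDiarmid

variable {V : Type*} [DecidableEq V] {p : ℝ}

theorem resampleList_exp_mul_sub_eq (l : List V) (f : (V → Bool) → ℝ) (t a b : ℝ) :
    resampleList p l (fun x => exp (t * (a - f x)))
      = fun g => exp (t * (a - b)) * resampleList p l (fun x => exp (t * (b - f x))) g := by
  rw [← resampleList_const_mul]
  congr 1
  funext x
  rw [← exp_add]
  ring_nf

theorem resampleList_exp_sub_le (hp0 : 0 ≤ p) (hp1 : p ≤ 1) {f : (V → Bool) → ℝ} {c : V → ℝ}
    (hf : ∀ v g, |f (update g v true) - f (update g v false)| ≤ c v) (t : ℝ) {l : List V}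
    (hl : l.Nodup) (g : V → Bool) :
    resampleList p l (fun x => exp (t * (resampleList p l f g - f x))) g
      ≤ exp (t ^ 2 * (l.map fun v => c v ^ 2).sum / 2) := by
  induction l generalizing g with
  | nil => simp [resampleList]
  | cons v l ih =>
    obtain ⟨hvl, hl⟩ := List.nodup_cons.1 hl
    set m : Bool → ℝ := fun b => resampleList p l f (update g v b)
    set M := resampleList p (v :: l) f g
    set K := exp (t ^ 2 * (l.map fun v => c v ^ 2).sum / 2)
    have hstep (b : Bool) :
        resampleList p l (fun x => exp (t * (M - f x))) (update g v b)
          ≤ exp (t * (M - m b)) * K := by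
      rw [resampleList_exp_mul_sub_eq l f t M (m b)]
      exact mul_le_mul_of_nonneg_left (ih hl _) (exp_pos _).le
    have hd : |m true - m false| ≤ c v := abs_resampleList_update_sub_le hp0 hp1 hvl (hf v) g
    have hM : M = p * m true + (1 - p) * m false := rfl
    calc resampleList p (v :: l) (fun x => exp (t * (M - f x))) g
        = p * resampleList p l (fun x => exp (t * (M - f x))) (update g v true)
          + (1 - p) * resampleList p l (fun x => exp (t * (M - f x))) (update g v false) := rfl
      _ ≤ p * (exp (t * (M - m true)) * K) + (1 - p) * (exp (t * (M - m false)) * K) := by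
        gcongr <;> exact hstep _
      _ = (p * exp (t * ((1 - p) * (m false - m true)))
          + (1 - p) * exp (t * (p * (m true - m false)))) * K := by
        rw [hM]
        ring_nf
      _ ≤ exp ((t * c v) ^ 2 / 2) * K := by
        gcongr
        refine two_point_mgf_le hp0 hp1 (by ring) ?_ ?_ t
        · rw [abs_mul, abs_of_nonneg (by linarith : 0 ≤ 1 - p), abs_sub_comm]
          nlinarith [abs_nonneg (m true - m false)]
        · rw [abs_mul, abs_of_nonneg hp0]
          nlinarith [abs_nonneg (m true - m false)]
      _ = exp (t ^ 2 * ((v :: l).map fun v => c v ^ 2).sum / 2) := by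
        rw [← exp_add, List.map_cons, List.sum_cons]
        ring_nf

variable [Fintype V]

theorem cubeExp_exp_mul_sub_le (hp0 : 0 ≤ p) (hp1 : p ≤ 1) {f : (V → Bool) → ℝ} {c : V → ℝ}
    (hf : ∀ v g, |f (update g v true) - f (update g v false)| ≤ c v) (t : ℝ) :
    cubeExp p (fun g => exp (t * (cubeExp p f - f g))) ≤ exp (t ^ 2 * (∑ v, c v ^ 2) / 2) := by
  have h := resampleList_exp_sub_le hp0 hp1 hf t (Finset.univ.nodup_toList) (fun _ => true)
  rwa [resampleList_univ, resampleList_univ, Finset.sum_map_toList] at h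

theorem pr_le_exp_mul_cubeExp (hp0 : 0 ≤ p) (hp1 : p ≤ 1) {E : (V → Bool) → Prop}
    {X : (V → Bool) → ℝ} {ε t : ℝ} (ht : 0 ≤ t) (hE : ∀ g, E g → ε ≤ X g) :
    pr p E ≤ exp (-(t * ε)) * cubeExp p (fun g => exp (t * X g)) := by
  rw [pr_eq_sum_cubeWeight, cubeExp, Finset.mul_sum]
  refine Finset.sum_le_sum fun g _ => ?_
  have hw := cubeWeight_nonneg hp0 hp1 g
  split_ifs with hg
  · have h1 : 1 ≤ exp (-(t * ε)) * exp (t * X g) := by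
      rw [← exp_add]
      exact one_le_exp (by nlinarith [hE g hg])
    nlinarith
  · positivity

theorem pr_le_exp_of_le_cubeExp_sub (hp0 : 0 ≤ p) (hp1 : p ≤ 1) {f : (V → Bool) → ℝ}
    {c : V → ℝ} (hf : ∀ v g, |f (update g v true) - f (update g v false)| ≤ c v)
    {E : (V → Bool) → Prop} {ε : ℝ} (hε : 0 ≤ ε) (hE : ∀ g, E g → ε ≤ cubeExp p f - f g) :
    pr p E ≤ exp (-ε ^ 2 / (2 * ∑ v, c v ^ 2)) := by
  set S := ∑ v, c v ^ 2
  have hS : 0 ≤ S := by positivity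
  calc pr p E ≤ exp (-(ε / S * ε)) * cubeExp p (fun g => exp (ε / S * (cubeExp p f - f g))) :=
        pr_le_exp_mul_cubeExp hp0 hp1 (by positivity) hE
    _ ≤ exp (-(ε / S * ε)) * exp ((ε / S) ^ 2 * S / 2) := by
        gcongr
        exact cubeExp_exp_mul_sub_le hp0 hp1 hf _
    _ = exp (-ε ^ 2 / (2 * S)) := by
        rw [← exp_add]
        congr 1
        rcases hS.eq_or_lt with hS0 | hS0
        · simp [← hS0]
        · field_simp
          ring

end McDiarmid

section AllBlue

variable {V ι : Type*} [Fintype ι]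

noncomputable def allBlueCount (A : ι → Finset V) (g : V → Bool) : ℝ :=
  ∑ j, if ∀ v ∈ A j, g v = true then 1 else 0

variable [DecidableEq V]

theorem abs_allBlueCount_update_sub_le (A : ι → Finset V) (v : V) (g : V → Bool) :
    |allBlueCount A (update g v true) - allBlueCount A (update g v false)|
      ≤ (Finset.univ.filter fun j => v ∈ A j).card := by
  have hterm (j : ι) :
      |(if ∀ u ∈ A j, update g v true u = true then (1 : ℝ) else 0)
        - (if ∀ u ∈ A j, update g v false u = true then 1 else 0)| ≤ if v ∈ A j then 1 else 0 := by
    by_cases hv : v ∈ A j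
    · rw [if_pos hv]
      split_ifs <;> norm_num
    · have hoff (b : Bool) : (∀ u ∈ A j, update g v b u = true) ↔ ∀ u ∈ A j, g u = true :=
        forall₂_congr fun u hu => by rw [update_of_ne (ne_of_mem_of_not_mem hu hv)]
      simp [hoff, hv]
  rw [allBlueCount, allBlueCount, ← Finset.sum_sub_distrib, ← Finset.sum_boole]
  exact (Finset.abs_sum_le_sum_abs _ _).trans (Finset.sum_le_sum fun j _ => hterm j)

variable [Fintype V]

theorem cubeExp_indicator_forall_true (p : ℝ) (s : Finset V) :
    cubeExp p (fun g => if ∀ v ∈ s, g v = true then 1 else 0) = p ^ s.card := by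
  have hprod : (fun g : V → Bool => if ∀ v ∈ s, g v = true then (1 : ℝ) else 0)
      = fun g => ∏ v, if v ∈ s then (if g v = true then 1 else 0) else 1 := by
    funext g
    rw [Finset.prod_ite_mem, Finset.univ_inter, Finset.prod_boole]
    congr
  rw [hprod, cubeExp_prod p fun v b => if v ∈ s then (if b = true then 1 else 0) else 1]
  simp [apply_ite, Finset.prod_ite_mem]

theorem cubeExp_allBlueCount (p : ℝ) (A : ι → Finset V) :
    cubeExp p (allBlueCount A) = ∑ j, p ^ (A j).card := by
  unfold allBlueCount
  rw [cubeExp_sum]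
  exact Finset.sum_congr rfl fun j _ => by convert cubeExp_indicator_forall_true p (A j)

end AllBlue

theorem stmt4_general {V : Type*} [Fintype V] [DecidableEq V] (step : (V → Bool) → (V → Bool))
    (k s : ℕ) (A : Fin k → Finset V)
    (hs : s = Finset.univ.sup fun j : Fin k => (A j).card)
    (a : V → ℕ)
    (ha : ∀ v, a v = (Finset.univ.filter fun j : Fin k => v ∈ A j).card)
    (heternal : ∀ j : Fin k, ∀ g : V → Bool, (∀ v ∈ A j, g v = true) →
      ∀ t : ℕ, ∃ v, (step^[t] g) v = true)
    (p : ℝ) (hp0 : 0 ≤ p) (hp1 : p ≤ 1) :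
    pr p (fun g => ∃ t : ℕ, ∀ v, (step^[t] g) v = false) ≤
      Real.exp (-(k : ℝ) ^ 2 * p ^ (2 * s) / (2 * ∑ v : V, (a v : ℝ) ^ 2)) := by
  have hdiff (v : V) (g : V → Bool) :
      |allBlueCount A (update g v true) - allBlueCount A (update g v false)| ≤ a v := by
    rw [ha v]
    exact abs_allBlueCount_update_sub_le A v g
  have hmean : (k : ℝ) * p ^ s ≤ cubeExp p (allBlueCount A) := by
    rw [cubeExp_allBlueCount]
    calc (k : ℝ) * p ^ s = ∑ _j : Fin k, p ^ s := by simp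
      _ ≤ ∑ j, p ^ (A j).card := Finset.sum_le_sum fun j _ =>
        pow_le_pow_of_le_one hp0 hp1
          (hs ▸ Finset.le_sup (f := fun j => (A j).card) (Finset.mem_univ j))
  have hdead (g : V → Bool) (hred : ∃ t : ℕ, ∀ v, (step^[t] g) v = false) :
      allBlueCount A g = 0 := by
    obtain ⟨t, hred⟩ := hred
    refine Finset.sum_eq_zero fun j _ => if_neg fun hblue => ?_
    obtain ⟨v, hv⟩ := heternal j g hblue t
    simp [hred v] at hv
  calc pr p (fun g => ∃ t : ℕ, ∀ v, (step^[t] g) v = false)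
      ≤ exp (-((k : ℝ) * p ^ s) ^ 2 / (2 * ∑ v : V, (a v : ℝ) ^ 2)) :=
        pr_le_exp_of_le_cubeExp_sub hp0 hp1 hdiff (by positivity) fun g hg => by
          rwa [hdead g hg, sub_zero]
    _ = exp (-(k : ℝ) ^ 2 * p ^ (2 * s) / (2 * ∑ v : V, (a v : ℝ) ^ 2)) := by ring_nf

/-- Azuma-type bound: if `V'_1, …, V'_k` are (not necessarily disjoint) b-eternal sets
with `s = max_j |V'_j|` and `a v` is the number of sets containing `v`, then the
probability of ever reaching an all-red generation is at most
`exp(-k² p_b^{2s} / (2 ∑_v a_v²))`. -/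
theorem stmt4 {V : Type*} [Fintype V] [DecidableEq V] (G : SimpleGraph V)
    [DecidableRel G.Adj] (step : (V → Bool) → (V → Bool))
    (hstep : step = majStep G ∨ step = bmajStep G)
    (k s : ℕ) (A : Fin k → Finset V)
    (hs : s = Finset.univ.sup fun j : Fin k => (A j).card)
    (a : V → ℕ)
    (ha : ∀ v, a v = (Finset.univ.filter fun j : Fin k => v ∈ A j).card)
    (heternal : ∀ j : Fin k, ∀ g : V → Bool, (∀ v ∈ A j, g v = true) →
      ∀ t : ℕ, ∃ v, (step^[t] g) v = true)
    (p : ℝ) (hp0 : 0 ≤ p) (hp1 : p ≤ 1) :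
    pr p (fun g => ∃ t : ℕ, ∀ v, (step^[t] g) v = false) ≤
      Real.exp (-(k : ℝ) ^ 2 * p ^ (2 * s) / (2 * ∑ v : V, (a v : ℝ) ^ 2)) :=
  stmt4_general step k s A hs a ha heternal p hp0 hp1
end

section
/- For any finite graph G=(V,E) and any initial two-coloring, the majority model dynamics (synchronous majority update with ties conserving the current color) eventually reaches a cycle of configurations of length one or two. -/
/-!
Following Goles and Olivos, measure two consecutive configurations `x, y` by the number
`E(x, y)` of ordered edges `(u, v)` with `x u ≠ y v`. This is symmetric, and the majority
update chooses `y v` so as to minimise the contribution of `v`; hence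
`E(xₜ₊₁, xₜ₊₂) ≤ E(xₜ₊₁, xₜ) = E(xₜ, xₜ₊₁)`, so the energy is eventually constant. Once it is,
every vertex satisfies `xₜ₊₂ v = xₜ v` or it faced a tie, in which case `xₜ₊₂ v = xₜ₊₁ v`.
A vertex that ever repeats its colour is then frozen forever, so each vertex, and hence the
whole configuration, eventually has period two.
-/

open scoped Classical

open Finset Filter

theorem eventually_add_two_eq_of_eq_or_eq {α : Type*} {b : ℕ → α}
    (h : ∀ᶠ s in atTop, b (s + 2) = b s ∨ b (s + 2) = b (s + 1)) :
    ∀ᶠ s in atTop, b (s + 2) = b s := by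
  obtain ⟨M, hM⟩ := eventually_atTop.1 h
  by_cases hperiodic : ∀ s ≥ M, b (s + 2) = b s
  · exact eventually_atTop.2 ⟨M, hperiodic⟩
  push Not at hperiodic
  obtain ⟨s₀, hs₀, hne⟩ := hperiodic
  have hfrozen : ∀ s ≥ s₀ + 1, b (s + 1) = b s := by
    intro s hs
    induction s, hs using Nat.le_induction with
    | base => exact (hM s₀ hs₀).resolve_left hne
    | succ s hs ih => exact (hM s (by omega)).elim (·.trans ih.symm) id
  exact eventually_atTop.2 ⟨s₀ + 1, fun s hs => by rw [hfrozen (s + 1) (by omega), hfrozen s hs]⟩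

section Energy

variable {V : Type*} [Fintype V] (G : SimpleGraph V) [DecidableRel G.Adj]

def disagreeCount (x : V → Bool) (c : Bool) (v : V) : ℕ :=
  #{u ∈ G.neighborFinset v | x u ≠ c}

def energy (x y : V → Bool) : ℕ :=
  ∑ v, disagreeCount G x (y v) v

theorem energy_comm (x y : V → Bool) : energy G x y = energy G y x := by
  have hsum (x y : V → Bool) :
      energy G x y = ∑ v, ∑ u, if G.Adj v u ∧ x u ≠ y v then 1 else 0 := by
    refine sum_congr rfl fun v _ => ?_
    rw [disagreeCount, card_filter, SimpleGraph.neighborFinset_eq_filter, sum_filter]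
    exact sum_congr rfl fun u _ => by by_cases G.Adj v u <;> simp [*]
  rw [hsum, hsum, sum_comm]
  simp only [G.adj_comm, ne_comm]

variable [DecidableEq V]

theorem disagreeCount_true (x : V → Bool) (v : V) :
    disagreeCount G x true v = redCount G x v := by
  simp [disagreeCount, redCount]

theorem disagreeCount_false (x : V → Bool) (v : V) :
    disagreeCount G x false v = blueCount G x v := by
  simp [disagreeCount, blueCount]

theorem disagreeCount_majStep_le (x : V → Bool) (v : V) (c : Bool) :
    disagreeCount G x (majStep G x v) v ≤ disagreeCount G x c v := by
  have hred := disagreeCount_true G x v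
  have hblue := disagreeCount_false G x v
  unfold majStep
  split_ifs <;> cases c <;> cases x v <;> simp_all <;> omega

theorem majStep_eq_or_eq_self_of_disagreeCount_eq (x : V → Bool) (v : V) (c : Bool)
    (h : disagreeCount G x (majStep G x v) v = disagreeCount G x c v) :
    majStep G x v = c ∨ majStep G x v = x v := by
  by_cases hc : majStep G x v = c
  · exact Or.inl hc
  have htie : redCount G x v = blueCount G x v := by
    rw [← disagreeCount_true, ← disagreeCount_false]
    cases hm : majStep G x v <;> cases c <;> simp_all
  right
  simp [majStep, htie]

theorem energy_majStep_le (x y : V → Bool) : energy G x (majStep G x) ≤ energy G x y :=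
  sum_le_sum fun v _ => disagreeCount_majStep_le G x v (y v)

theorem majStep_eq_or_eq_self_of_energy_eq (x y : V → Bool)
    (h : energy G x (majStep G x) = energy G x y) (v : V) :
    majStep G x v = y v ∨ majStep G x v = x v :=
  majStep_eq_or_eq_self_of_disagreeCount_eq G x v (y v) <|
    (sum_eq_sum_iff_of_le fun v _ => disagreeCount_majStep_le G x v (y v)).1 h v (mem_univ v)

theorem antitone_energy_iterate_majStep (g : V → Bool) :
    Antitone fun t => energy G ((majStep G)^[t] g) ((majStep G)^[t + 1] g) := by
  refine antitone_nat_of_succ_le fun t => ?_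
  rw [Function.iterate_succ_apply' (majStep G) (t + 1), energy_comm G ((majStep G)^[t] g)]
  exact energy_majStep_le G _ _

theorem eventually_iterate_majStep_two_eq_or (g : V → Bool) :
    ∀ᶠ t in atTop, ∀ v, (majStep G)^[t + 2] g v = (majStep G)^[t] g v ∨
      (majStep G)^[t + 2] g v = (majStep G)^[t + 1] g v := by
  obtain ⟨a, ha⟩ := WellFoundedLT.antitone_chain_condition (antitone_energy_iterate_majStep G g)
  refine eventually_atTop.2 ⟨a, fun t ht v => ?_⟩
  have hconst : energy G ((majStep G)^[t + 1] g) (majStep G ((majStep G)^[t + 1] g)) =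
      energy G ((majStep G)^[t + 1] g) ((majStep G)^[t] g) := by
    rw [← Function.iterate_succ_apply' (majStep G) (t + 1), energy_comm G _ ((majStep G)^[t] g),
      ← ha t ht, ha (t + 1) (by omega)]
  rw [Function.iterate_succ_apply' (majStep G) (t + 1)]
  exact majStep_eq_or_eq_self_of_energy_eq G _ _ hconst v

end Energy

/-- On any finite graph, the majority dynamics eventually reaches a cycle of
configurations of length one or two. -/
theorem stmt5 {V : Type*} [Fintype V] [DecidableEq V] (G : SimpleGraph V)
    [DecidableRel G.Adj] (g : V → Bool) :
    ∃ N : ℕ, (majStep G)^[N + 2] g = (majStep G)^[N] g := by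
  have hperiodic : ∀ᶠ t in atTop, ∀ v, (majStep G)^[t + 2] g v = (majStep G)^[t] g v :=
    eventually_all.2 fun v =>
      eventually_add_two_eq_of_eq_or_eq (b := fun t => (majStep G)^[t] g v) <|
      (eventually_iterate_majStep_two_eq_or G g).mono fun t ht => ht v
  obtain ⟨N, hN⟩ := hperiodic.exists
  exact ⟨N, funext hN⟩
end

section
/- For any finite graph G=(V,E) and any initial two-coloring, the biased majority model dynamics (synchronous majority update where ties always become blue) eventually reaches a cycle of configurations of length one or two. -/
open scoped Classical

/-!
Goles–Olivos energy argument. Encoding blue and red as spins `±1`, a biased majority step is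
the threshold network `x ↦ [W x ≥ θ]` with `W` the (symmetric) adjacency matrix and `θ = 0`. Write
`y`, `z` for the next two states and `L(x) = 2 (W x - θ) + 1`. The energy
`E(x) = -⟨y, L(x)⟩ + ⟨x, 2θ - 1⟩` satisfies `E(x) - E(y) = ⟨z - x, L(y)⟩` by symmetry of `W`,
and since `z` has the sign of `L(y)` every term is nonnegative, and positive where `z ≠ x`.
So `E` decreases strictly until `x = z`, which must happen on a finite state space.
-/

open Matrix

theorem Function.exists_iterate_add_two_eq_of_lt {α β : Type*} [Finite α] [Preorder β]
    {f : α → α} (E : α → β) (hE : ∀ x, f (f x) ≠ x → E (f x) < E x) (x : α) :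
    ∃ N : ℕ, f^[N + 2] x = f^[N] x := by
  have : IsTrans α (fun a b => E a < E b) := ⟨fun _ _ _ => lt_trans⟩
  have : Std.Irrefl (fun a b : α => E a < E b) := ⟨fun _ => lt_irrefl _⟩
  induction x using (Finite.wellFounded_of_trans_of_irrefl fun a b => E a < E b).induction with
  | _ x ih =>
    by_cases hx : f (f x) = x
    · exact ⟨0, hx⟩
    · obtain ⟨N, hN⟩ := ih (f x) (hE x hx)
      exact ⟨N + 1, hN⟩

namespace ThresholdNetwork

variable {V : Type*}

def spin (g : V → Bool) : V → ℤ := fun v => if g v then 1 else -1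

theorem spin_eq_neg_of_ne {g h : V → Bool} {v : V} (hv : g v ≠ h v) : spin h v = -spin g v := by
  cases hg : g v <;> cases hh : h v <;> simp_all [spin]

variable [Fintype V]

def step (W : Matrix V V ℤ) (θ : V → ℤ) (g : V → Bool) : V → Bool :=
  fun v => decide (θ v ≤ (W *ᵥ spin g) v)

-- Odd, hence never zero: the new spin at `v` always has the strict sign of the local field.
def localField (W : Matrix V V ℤ) (θ : V → ℤ) (g : V → Bool) : V → ℤ :=
  fun v => 2 * ((W *ᵥ spin g) v - θ v) + 1

def energy (W : Matrix V V ℤ) (θ : V → ℤ) (g : V → Bool) : ℤ :=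
  -(spin (step W θ g) ⬝ᵥ localField W θ g) + spin g ⬝ᵥ fun v => 2 * θ v - 1

variable (W : Matrix V V ℤ) (θ : V → ℤ)

theorem spin_step_mul_localField_pos (g : V → Bool) (v : V) :
    0 < spin (step W θ g) v * localField W θ g v := by
  by_cases hθ : θ v ≤ (W *ᵥ spin g) v
  · simp only [spin, step, localField, hθ, decide_true, if_true]
    omega
  · simp only [spin, step, localField, hθ, decide_false, Bool.false_eq_true, if_false]
    omega

theorem sub_spin_mul_localField_pos {g h : V → Bool} {v : V} (hv : step W θ g v ≠ h v) :
    0 < (spin (step W θ g) v - spin h v) * localField W θ g v := by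
  rw [spin_eq_neg_of_ne hv, sub_neg_eq_add, ← two_mul, mul_assoc]
  exact mul_pos two_pos (spin_step_mul_localField_pos W θ g v)

theorem sub_spin_mul_localField_nonneg (g h : V → Bool) (v : V) :
    0 ≤ (spin (step W θ g) v - spin h v) * localField W θ g v := by
  by_cases hv : step W θ g v = h v
  · simp [spin, hv]
  · exact (sub_spin_mul_localField_pos W θ hv).le

theorem energy_sub_energy_step (hW : W.IsSymm) (g : V → Bool) :
    energy W θ g - energy W θ (step W θ g) =
      (spin (step W θ (step W θ g)) - spin g) ⬝ᵥ localField W θ (step W θ g) := by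
  have hsymm : spin (step W θ g) ⬝ᵥ (W *ᵥ spin g) = spin g ⬝ᵥ (W *ᵥ spin (step W θ g)) := by
    rw [dotProduct_mulVec, ← mulVec_transpose, hW.eq, dotProduct_comm]
  simp only [energy, localField, dotProduct, Pi.sub_apply] at hsymm ⊢
  simp only [mul_add, mul_sub, sub_mul, mul_left_comm _ (2 : ℤ), Finset.sum_add_distrib,
    Finset.sum_sub_distrib, ← Finset.mul_sum]
  linear_combination (-2 : ℤ) * hsymm

theorem energy_step_lt (hW : W.IsSymm) {g : V → Bool} (hg : step W θ (step W θ g) ≠ g) :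
    energy W θ (step W θ g) < energy W θ g := by
  obtain ⟨v, hv⟩ := Function.ne_iff.mp hg
  have hpos :
      0 < (spin (step W θ (step W θ g)) - spin g) ⬝ᵥ localField W θ (step W θ g) :=
    Finset.sum_pos' (fun u _ => sub_spin_mul_localField_nonneg W θ _ g u)
      ⟨v, Finset.mem_univ v, sub_spin_mul_localField_pos W θ hv⟩
  linarith [energy_sub_energy_step W θ hW g]

theorem exists_iterate_step_add_two_eq (hW : W.IsSymm) (g : V → Bool) :
    ∃ N : ℕ, (step W θ)^[N + 2] g = (step W θ)^[N] g :=
  Function.exists_iterate_add_two_eq_of_lt (energy W θ) (fun _ => energy_step_lt W θ hW) g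

end ThresholdNetwork

section BiasedMajority

variable {V : Type*} [Fintype V] [DecidableEq V] (G : SimpleGraph V) [DecidableRel G.Adj]

theorem sum_spin_neighborFinset (g : V → Bool) (v : V) :
    ∑ u ∈ G.neighborFinset v, ThresholdNetwork.spin g u =
      (blueCount G g v : ℤ) - redCount G g v := by
  simp [ThresholdNetwork.spin, Finset.sum_ite, blueCount, redCount, sub_eq_add_neg]

theorem bmajStep_eq_thresholdNetwork_step :
    bmajStep G = ThresholdNetwork.step (G.adjMatrix ℤ) 0 := by
  funext g v
  simp [bmajStep, ThresholdNetwork.step, SimpleGraph.adjMatrix_mulVec_apply,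
    sum_spin_neighborFinset]

end BiasedMajority

/-- On any finite graph, the biased majority dynamics (ties become blue) eventually
reaches a cycle of configurations of length one or two. -/
theorem stmt6 {V : Type*} [Fintype V] [DecidableEq V] (G : SimpleGraph V)
    [DecidableRel G.Adj] (g : V → Bool) :
    ∃ N : ℕ, (bmajStep G)^[N + 2] g = (bmajStep G)^[N] g := by
  rw [bmajStep_eq_thresholdNetwork_step]
  exact ThresholdNetwork.exists_iterate_step_add_two_eq _ 0 G.isSymm_adjMatrix g
end

section
/- For any finite graph G=(V,E), the consensus time of the majority model (the number of steps until the trajectory enters its eventual periodic cycle) is at most |E|, for every initial configuration. -/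
/-!
Encode colours as spins `σ = ±1`. The majority rule with tie-keeping is the threshold rule of
the symmetric integer matrix `A + D`, with `A` the adjacency matrix and `D` the diagonal matrix
with a `1` at each even-degree vertex: this makes every local field odd, so `σ (F x)` is exactly
its sign and maximises `y ↦ B y x := ⟨σ y, (A + D) σ x⟩`, with a gain of `2` at each vertex
where `y` disagrees with `F x`. By symmetry of `B`, the energy `E x := B (F x) x` satisfies
`E (F x) = B (F (F x)) (F x) ≥ B x (F x) + 2 = E x + 2` whenever `F (F x) ≠ x`
(Poljak–Turzík). Since `|V| ≤ E ≤ 2|E| + |V|`, the first `|E| + 1` steps of a trajectory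
cannot all satisfy `F (F x) ≠ x`, and a point with `F (F x) = x` stays on a `2`-cycle.
-/

open scoped Classical

section SymmetricPotential

open Function

variable {α : Type*} {F : α → α} {B : α → α → ℤ}

lemma add_two_le_of_apply_apply_ne (hB : ∀ x y, B x y = B y x)
    (hgain : ∀ x y, y ≠ F x → B y x + 2 ≤ B (F x) x) {x : α} (hx : F (F x) ≠ x) :
    B (F x) x + 2 ≤ B (F (F x)) (F x) := by
  rw [hB]
  exact hgain (F x) x hx.symm

theorem iterate_add_two_eq_of_symmetric_potential (hB : ∀ x y, B x y = B y x)
    (hgain : ∀ x y, y ≠ F x → B y x + 2 ≤ B (F x) x) {lo hi : ℤ}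
    (hlo : ∀ x, lo ≤ B (F x) x) (hhi : ∀ x, B (F x) x ≤ hi) {n : ℕ} (hn : hi - lo ≤ 2 * n)
    (x : α) : F^[n + 2] x = F^[n] x := by
  by_contra hne
  have hflip : ∀ t ≤ n, F (F (F^[t] x)) ≠ F^[t] x := by
    intro t ht hper
    have hper' := (show IsPeriodicPt F 2 (F^[t] x) from hper).apply_iterate (n - t)
    rw [← iterate_add_apply, Nat.sub_add_cancel ht, IsPeriodicPt, IsFixedPt,
      ← iterate_add_apply, add_comm] at hper'
    exact hne hper'
  have hgrow : ∀ t ≤ n + 1, lo + 2 * t ≤ B (F (F^[t] x)) (F^[t] x) := by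
    intro t
    induction t with
    | zero => simpa using hlo x
    | succ t ih =>
      intro ht
      rw [iterate_succ_apply']
      have hstep := add_two_le_of_apply_apply_ne hB hgain (hflip t (by omega))
      push_cast
      linarith [ih (by omega)]
  have hlast := hgrow (n + 1) le_rfl
  push_cast at hlast
  linarith [hhi (F^[n + 1] x)]

end SymmetricPotential

def spin : Bool → ℤ
  | true => 1
  | false => -1

lemma spin_not (b : Bool) : spin (!b) = -spin b := by
  cases b <;> rfl

lemma Finset.sum_spin {ι : Type*} (s : Finset ι) (x : ι → Bool) :
    ∑ i ∈ s, spin (x i) = ((s.filter (x · = true)).card : ℤ) - (s.filter (x · = false)).card := by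
  have hs : ∀ i, spin (x i) = if x i = true then 1 else -1 := fun i => by cases x i <;> rfl
  simp only [hs, Finset.sum_ite, Finset.sum_const, nsmul_eq_mul, mul_one, mul_neg,
    Bool.not_eq_true]
  ring

namespace SimpleGraph

open Finset Matrix

variable {V : Type*} [Fintype V] [DecidableEq V] (G : SimpleGraph V) [DecidableRel G.Adj]

lemma blueCount_add_redCount (x : V → Bool) (v : V) :
    blueCount G x v + redCount G x v = G.degree v := by
  rw [← card_neighborFinset_eq_degree, ← card_filter_add_card_filter_not (fun u => x u = true)]
  simp only [blueCount, redCount, Bool.not_eq_true]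

def interactionMatrix : Matrix V V ℤ :=
  G.adjMatrix ℤ + Matrix.diagonal fun v => if Even (G.degree v) then 1 else 0

lemma transpose_interactionMatrix : G.interactionMatrixᵀ = G.interactionMatrix := by
  simp [interactionMatrix, transpose_adjMatrix]

def localField (x : V → Bool) : V → ℤ :=
  G.interactionMatrix *ᵥ (spin ∘ x)

lemma localField_apply (x : V → Bool) (v : V) :
    G.localField x v = (blueCount G x v : ℤ) - redCount G x v +
      if Even (G.degree v) then spin (x v) else 0 := by
  rw [localField, interactionMatrix, add_mulVec, Pi.add_apply, adjMatrix_mulVec_apply,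
    mulVec_diagonal, Function.comp_apply, ite_mul, one_mul, zero_mul]
  exact congrArg (· + _) ((G.neighborFinset v).sum_spin x)

def spinPairing (y x : V → Bool) : ℤ :=
  (spin ∘ y) ⬝ᵥ G.localField x

lemma spinPairing_comm (y x : V → Bool) : G.spinPairing y x = G.spinPairing x y := by
  rw [spinPairing, spinPairing, localField, localField, dotProduct_mulVec,
    ← vecMul_transpose, transpose_interactionMatrix, dotProduct_comm]

lemma one_le_spin_majStep_mul_localField (x : V → Bool) (v : V) :
    1 ≤ spin (majStep G x v) * G.localField x v := by
  have hdeg := G.blueCount_add_redCount x v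
  simp only [localField_apply, Nat.even_iff, majStep]
  cases x v <;> split_ifs <;> simp only [spin] <;> omega

lemma spin_mul_localField_le (c : Bool) (x : V → Bool) (v : V) :
    spin c * G.localField x v ≤ G.degree v + 1 := by
  have hdeg := G.blueCount_add_redCount x v
  simp only [localField_apply, Nat.even_iff]
  cases c <;> cases x v <;> split_ifs <;> simp only [spin] <;> omega

lemma spin_mul_localField_add_two_le {c : Bool} {x : V → Bool} {v : V}
    (hc : c ≠ majStep G x v) :
    spin c * G.localField x v + 2 ≤ spin (majStep G x v) * G.localField x v := by
  rw [Bool.eq_not_of_ne hc, spin_not]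
  linarith [G.one_le_spin_majStep_mul_localField x v]

lemma spin_mul_localField_le_spin_majStep_mul (c : Bool) (x : V → Bool) (v : V) :
    spin c * G.localField x v ≤ spin (majStep G x v) * G.localField x v := by
  by_cases hc : c = majStep G x v
  · rw [hc]
  · linarith [G.spin_mul_localField_add_two_le hc]

lemma spinPairing_add_two_le {x y : V → Bool} (hy : y ≠ majStep G x) :
    G.spinPairing y x + 2 ≤ G.spinPairing (majStep G x) x := by
  obtain ⟨v, hv⟩ := Function.ne_iff.1 hy
  simp only [spinPairing, dotProduct, Function.comp_apply,
    ← add_sum_erase univ _ (mem_univ v)]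
  linarith [G.spin_mul_localField_add_two_le hv, sum_le_sum fun u (_ : u ∈ univ.erase v) =>
    G.spin_mul_localField_le_spin_majStep_mul (y u) x u]

lemma card_le_spinPairing_majStep (x : V → Bool) :
    (Fintype.card V : ℤ) ≤ G.spinPairing (majStep G x) x := by
  simpa [spinPairing, dotProduct] using
    sum_le_sum fun v (_ : v ∈ univ) => G.one_le_spin_majStep_mul_localField x v

lemma spinPairing_majStep_le (x : V → Bool) :
    G.spinPairing (majStep G x) x ≤ 2 * #G.edgeFinset + Fintype.card V := by
  calc G.spinPairing (majStep G x) x ≤ ∑ v, ((G.degree v : ℤ) + 1) :=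
        sum_le_sum fun v _ => G.spin_mul_localField_le _ x v
    _ = 2 * #G.edgeFinset + Fintype.card V := by
        rw [sum_add_distrib, ← Nat.cast_sum, G.sum_degrees_eq_twice_card_edges]
        simp

end SimpleGraph

theorem stmt7_general {V : Type*} [Fintype V] [DecidableEq V] (G : SimpleGraph V)
    [DecidableRel G.Adj] (g : V → Bool) :
    (majStep G)^[G.edgeFinset.card + 2] g = (majStep G)^[G.edgeFinset.card] g :=
  iterate_add_two_eq_of_symmetric_potential G.spinPairing_comm
    (fun _ _ => G.spinPairing_add_two_le) G.card_le_spinPairing_majStep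
    G.spinPairing_majStep_le (by omega) g

/-- For any finite graph, from every initial configuration the majority-model trajectory
has entered its eventual periodic cycle (of length one or two) after at most |E| steps. -/
theorem stmt7 {V : Type*} [Fintype V] [DecidableEq V] (G : SimpleGraph V)
    [DecidableRel G.Adj] [DecidableEq (Sym2 V)] (g : V → Bool) :
    (majStep G)^[G.edgeFinset.card + 2] g = (majStep G)^[G.edgeFinset.card] g :=
  stmt7_general G g
end

section
/- In the majority model on the torus T_{n,n} with von Neumann neighborhood (n ≥ 5), if the largest blue cluster in generation g_j has size at most 3, then generation g_{j+1} has largest blue cluster of size at most 1, and hence generation g_{j+2} is entirely red. -/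
/-- Number of blue cells among the four von Neumann neighbors of `v` in the torus. -/
def vnCount (n : ℕ) (g : ZMod n × ZMod n → Bool) (v : ZMod n × ZMod n) : ℕ :=
  (if g (v.1 + 1, v.2) = true then 1 else 0) + (if g (v.1 - 1, v.2) = true then 1 else 0) +
    (if g (v.1, v.2 + 1) = true then 1 else 0) + (if g (v.1, v.2 - 1) = true then 1 else 0)

/-- One synchronous step of the majority model on the torus `T_{n,n}` with von Neumann
neighborhood: strict majority among the 4 neighbors, ties conserve the current color. -/
def torusMajStep (n : ℕ) (g : ZMod n × ZMod n → Bool) : ZMod n × ZMod n → Bool :=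
  fun v => if 2 < vnCount n g v then true else if vnCount n g v < 2 then false else g v

/-- One synchronous step of the biased majority model on the torus `T_{n,n}` with
von Neumann neighborhood: a cell becomes blue iff at least 2 of its 4 neighbors are blue. -/
def torusBMajStep (n : ℕ) (g : ZMod n × ZMod n → Bool) : ZMod n × ZMod n → Bool :=
  fun v => decide (2 ≤ vnCount n g v)

/-- Moore (8-)adjacency on the torus `T_{n,n}`. -/
def mooreAdj (n : ℕ) (u v : ZMod n × ZMod n) : Prop :=
  u ≠ v ∧ (u.1 = v.1 ∨ u.1 = v.1 + 1 ∨ v.1 = u.1 + 1) ∧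
    (u.2 = v.2 ∨ u.2 = v.2 + 1 ∨ v.2 = u.2 + 1)

/-- The Moore (8-)adjacency graph on the torus `T_{n,n}`. -/
def mooreGraph (n : ℕ) : SimpleGraph (ZMod n × ZMod n) where
  Adj := mooreAdj n
  symm := ⟨by
    rintro u v ⟨h0, h1, h2⟩
    exact ⟨Ne.symm h0, by tauto, by tauto⟩⟩
  loopless := ⟨fun v h => h.1 rfl⟩

/-- There is a blue, Moore-connected set of exactly `k` cells in configuration `g`.
(The largest blue cluster has size at most `k - 1` iff this fails.) -/
def HasBlueClusterOfSize (n : ℕ) (g : ZMod n × ZMod n → Bool) (k : ℕ) : Prop :=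
  ∃ S : Finset (ZMod n × ZMod n), S.card = k ∧ (∀ v ∈ S, g v = true) ∧
    ((mooreGraph n).induce (S : Set (ZMod n × ZMod n))).Connected

/-!
A cell is blue after a step only if at least three cells of its closed von Neumann neighbourhood
(a plus shape) are blue, and among any three cells of a plus shape one is Moore-adjacent to the
other two. If two Moore-adjacent cells were both blue after the step, their two blue triples would
touch: some cell of the second triple lies outside the first one and next to it, and together they
form a blue cluster of four cells. So after one step the blue cells are Moore-isolated; but a plus
shape with three blue cells contains two Moore-adjacent ones, so the next step is entirely red.

The local facts are finite checks in `ℤ × ℤ`, carried to the torus by translation, which is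
injective on the `5 × 5` square around the origin since `n ≥ 5`.
-/

open Finset

namespace SimpleGraph

variable {V W : Type*} {G : SimpleGraph V}

lemma induce_connected_of_forall_adj {s : Set V} {a : V} (ha : a ∈ s)
    (hadj : ∀ b ∈ s, b ≠ a → G.Adj a b) : (G.induce s).Connected := by
  rw [connected_iff_exists_forall_reachable]
  refine ⟨⟨a, ha⟩, fun ⟨b, hb⟩ => ?_⟩
  obtain rfl | hba := eq_or_ne b a
  · rfl
  · exact Adj.reachable (G := G.induce s) (hadj b hb hba)

lemma Connected.induce_insert {s : Set V} {a x : V} (hs : (G.induce s).Connected) (ha : a ∈ s)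
    (hax : G.Adj a x) : (G.induce (insert x s)).Connected := by
  rw [Set.insert_eq, Set.union_comm]
  exact connected_induce_union hs.preconnected Preconnected.of_subsingleton ha rfl hax

lemma adj_of_induce_pair_connected {u v : V} (huv : u ≠ v) (h : (G.induce {u, v}).Connected) :
    G.Adj u v := by
  obtain ⟨p⟩ := h.preconnected ⟨u, by simp⟩ ⟨v, by simp⟩
  have hnil : ¬ p.Nil := fun hp => huv (congrArg Subtype.val hp.eq)
  have hadj : G.Adj u p.snd := p.adj_snd hnil
  rcases p.snd.2 with hu | hv
  · rw [hu] at hadj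
    exact absurd hadj (G.loopless.irrefl u)
  · rwa [hv] at hadj

lemma Connected.induce_image {H : SimpleGraph W} {s : Set V} {f : V → W}
    (hf : ∀ a ∈ s, ∀ b ∈ s, G.Adj a b → H.Adj (f a) (f b)) (hs : (G.induce s).Connected) :
    (H.induce (f '' s)).Connected :=
  hs.map { toFun := fun (a : s) => ⟨f a, a.1, a.2, rfl⟩
           map_rel' := fun {a b} hab => hf a a.2 b b.2 hab }
    (by rintro ⟨_, a, ha, rfl⟩; exact ⟨⟨a, ha⟩, rfl⟩)

end SimpleGraph

def vnBall (p : ℤ × ℤ) : Finset (ℤ × ℤ) :=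
  {p, (p.1 + 1, p.2), (p.1 - 1, p.2), (p.1, p.2 + 1), (p.1, p.2 - 1)}

def kingGraph : SimpleGraph (ℤ × ℤ) where
  Adj p q := p ≠ q ∧ (p.1 - q.1).natAbs ≤ 1 ∧ (p.2 - q.2).natAbs ≤ 1
  symm := ⟨fun _ _ ⟨h, h1, h2⟩ => ⟨h.symm, by omega, by omega⟩⟩
  loopless := ⟨fun _ h => h.1 rfl⟩

instance : DecidableRel kingGraph.Adj := fun p q => by unfold kingGraph; infer_instance

def kingDirs : Finset (ℤ × ℤ) :=
  {(1, 0), (-1, 0), (0, 1), (0, -1), (1, 1), (1, -1), (-1, 1), (-1, -1)}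

lemma mem_kingDirs {d : ℤ × ℤ} (hd : d ≠ 0) (h1 : d.1.natAbs ≤ 1) (h2 : d.2.natAbs ≤ 1) :
    d ∈ kingDirs := by
  obtain ⟨a, b⟩ := d
  have ha : a = -1 ∨ a = 0 ∨ a = 1 := by omega
  have hb : b = -1 ∨ b = 0 ∨ b = 1 := by omega
  rcases ha with rfl | rfl | rfl <;> rcases hb with rfl | rfl | rfl <;> simp_all [kingDirs]

lemma natAbs_le_two_of_mem_vnBall :
    ∀ d ∈ insert 0 kingDirs, ∀ x ∈ vnBall d, x.1.natAbs ≤ 2 ∧ x.2.natAbs ≤ 2 := by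
  decide +kernel

lemma exists_adj_forall_of_subset_vnBall_zero :
    ∀ P ⊆ vnBall 0, #P = 3 → ∃ a ∈ P, ∀ b ∈ P, b ≠ a → kingGraph.Adj a b := by
  decide +kernel

lemma exists_adj_of_subset_vnBall_of_mem_kingDirs :
    ∀ d ∈ kingDirs, ∀ P ⊆ vnBall 0, ∀ Q ⊆ vnBall d, #P = 3 → #Q = 3 →
      ∃ x ∈ Q, x ∉ P ∧ ∃ p ∈ P, kingGraph.Adj p x := by
  decide +kernel

lemma connected_of_subset_vnBall_zero {P : Finset (ℤ × ℤ)} (hP : P ⊆ vnBall 0) (hcard : #P = 3) :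
    (kingGraph.induce (P : Set (ℤ × ℤ))).Connected := by
  obtain ⟨a, ha, hadj⟩ := exists_adj_forall_of_subset_vnBall_zero P hP hcard
  exact SimpleGraph.induce_connected_of_forall_adj (mem_coe.2 ha) hadj

section Torus

variable {n : ℕ}

def shift (n : ℕ) (u : ZMod n × ZMod n) (p : ℤ × ℤ) : ZMod n × ZMod n :=
  (u.1 + p.1, u.2 + p.2)

@[simp]
lemma shift_zero (u : ZMod n × ZMod n) : shift n u 0 = u := by
  simp [shift]

lemma ZMod.eq_of_intCast_eq_of_natAbs_sub_lt {a b : ℤ} (hab : (a - b).natAbs < n)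
    (h : (a : ZMod n) = b) : a = b := by
  rw [ZMod.intCast_eq_intCast_iff_dvd_sub] at h
  have := Int.eq_zero_of_abs_lt_dvd h (by rw [Int.abs_eq_natAbs]; omega)
  omega

lemma shift_injOn (hn : 5 ≤ n) (u : ZMod n × ZMod n) :
    Set.InjOn (shift n u) {p | p.1.natAbs ≤ 2 ∧ p.2.natAbs ≤ 2} := by
  rintro p ⟨hp1, hp2⟩ q ⟨hq1, hq2⟩ h
  simp only [shift, Prod.mk.injEq, add_right_inj] at h
  exact Prod.ext (ZMod.eq_of_intCast_eq_of_natAbs_sub_lt (by omega) h.1)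
    (ZMod.eq_of_intCast_eq_of_natAbs_sub_lt (by omega) h.2)

lemma add_intCast_eq_or_of_natAbs_sub_le_one (x : ZMod n) {a b : ℤ} (h : (a - b).natAbs ≤ 1) :
    x + a = x + b ∨ x + a = x + b + 1 ∨ x + b = x + a + 1 := by
  obtain rfl | rfl | rfl : a = b ∨ a = b + 1 ∨ b = a + 1 := by omega
  · exact Or.inl rfl
  · exact Or.inr (Or.inl (by push_cast; ring))
  · exact Or.inr (Or.inr (by push_cast; ring))

lemma mooreGraph_adj_shift (hn : 5 ≤ n) (u : ZMod n × ZMod n) {p q : ℤ × ℤ}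
    (hp : p.1.natAbs ≤ 2 ∧ p.2.natAbs ≤ 2) (hq : q.1.natAbs ≤ 2 ∧ q.2.natAbs ≤ 2)
    (h : kingGraph.Adj p q) : (mooreGraph n).Adj (shift n u p) (shift n u q) :=
  ⟨fun he => h.1 (shift_injOn hn u hp hq he), add_intCast_eq_or_of_natAbs_sub_le_one u.1 h.2.1,
    add_intCast_eq_or_of_natAbs_sub_le_one u.2 h.2.2⟩

lemma exists_intCast_eq_add (x y : ZMod n) (h : x = y ∨ x = y + 1 ∨ y = x + 1) :
    ∃ a : ℤ, a.natAbs ≤ 1 ∧ y = x + a := by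
  rcases h with rfl | rfl | rfl
  · exact ⟨0, by simp⟩
  · exact ⟨-1, by simp⟩
  · exact ⟨1, by simp⟩

lemma exists_mem_kingDirs_shift_eq {u v : ZMod n × ZMod n} (h : (mooreGraph n).Adj u v) :
    ∃ d ∈ kingDirs, v = shift n u d := by
  obtain ⟨hne, h1, h2⟩ := h
  obtain ⟨a, ha, hva⟩ := exists_intCast_eq_add u.1 v.1 h1
  obtain ⟨b, hb, hvb⟩ := exists_intCast_eq_add u.2 v.2 h2
  have hv : v = shift n u (a, b) := Prod.ext hva hvb
  refine ⟨(a, b), mem_kingDirs (fun h0 => hne ?_) ha hb, hv⟩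
  rw [hv, h0, shift_zero]

lemma card_blue_vnBall (g : ZMod n × ZMod n → Bool) (u : ZMod n × ZMod n) (p : ℤ × ℤ) :
    #{x ∈ vnBall p | g (shift n u x) = true} =
      (if g (shift n u p) = true then 1 else 0) + vnCount n g (shift n u p) := by
  have e1 : shift n u (p.1 + 1, p.2) = ((shift n u p).1 + 1, (shift n u p).2) := by
    simp [shift, add_assoc]
  have e2 : shift n u (p.1 - 1, p.2) = ((shift n u p).1 - 1, (shift n u p).2) := by
    simp [shift, add_sub_assoc]
  have e3 : shift n u (p.1, p.2 + 1) = ((shift n u p).1, (shift n u p).2 + 1) := by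
    simp [shift, add_assoc]
  have e4 : shift n u (p.1, p.2 - 1) = ((shift n u p).1, (shift n u p).2 - 1) := by
    simp [shift, add_sub_assoc]
  rw [card_filter, vnBall, sum_insert (by simp [Prod.ext_iff]; omega),
    sum_insert (by simp [Prod.ext_iff]; omega), sum_insert (by simp [Prod.ext_iff]),
    sum_insert (by simp [Prod.ext_iff]; omega), sum_singleton,
    vnCount, e1, e2, e3, e4]
  ring

lemma exists_blue_triple_of_torusMajStep {g : ZMod n × ZMod n → Bool} {u : ZMod n × ZMod n}
    {p : ℤ × ℤ} (h : torusMajStep n g (shift n u p) = true) :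
    ∃ P ⊆ vnBall p, #P = 3 ∧ ∀ x ∈ P, g (shift n u x) = true := by
  have h3 : 3 ≤ #{x ∈ vnBall p | g (shift n u x) = true} := by
    rw [card_blue_vnBall]
    unfold torusMajStep at h
    split_ifs at h <;> simp_all <;> omega
  obtain ⟨P, hP, hcard⟩ := exists_subset_card_eq h3
  exact ⟨P, hP.trans (filter_subset _ _), hcard, fun x hx => (mem_filter.1 (hP hx)).2⟩

lemma hasBlueClusterOfSize_card_of_shift (hn : 5 ≤ n) {g : ZMod n × ZMod n → Bool}
    {u : ZMod n × ZMod n} {S : Finset (ℤ × ℤ)}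
    (hS : ∀ x ∈ S, x.1.natAbs ≤ 2 ∧ x.2.natAbs ≤ 2)
    (hconn : (kingGraph.induce (S : Set (ℤ × ℤ))).Connected)
    (hblue : ∀ x ∈ S, g (shift n u x) = true) : HasBlueClusterOfSize n g #S := by
  refine ⟨S.image (shift n u), card_image_of_injOn ((shift_injOn hn u).mono hS),
    forall_mem_image.2 hblue, ?_⟩
  rw [coe_image]
  exact hconn.induce_image fun a ha b hb hab => mooreGraph_adj_shift hn u (hS a ha) (hS b hb) hab

lemma exists_adj_of_hasBlueClusterOfSize_two {g : ZMod n × ZMod n → Bool}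
    (h : HasBlueClusterOfSize n g 2) :
    ∃ u v, (mooreGraph n).Adj u v ∧ g u = true ∧ g v = true := by
  obtain ⟨S, hcard, hblue, hconn⟩ := h
  obtain ⟨u, v, huv, rfl⟩ := card_eq_two.1 hcard
  rw [coe_pair] at hconn
  exact ⟨u, v, SimpleGraph.adj_of_induce_pair_connected huv hconn, hblue u (by simp),
    hblue v (by simp)⟩

theorem torusMajStep_eq_false_of_mooreGraph_adj (hn : 5 ≤ n) {g : ZMod n × ZMod n → Bool}
    (h : ¬ HasBlueClusterOfSize n g 4) {u v : ZMod n × ZMod n} (huv : (mooreGraph n).Adj u v)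
    (hu : torusMajStep n g u = true) : torusMajStep n g v = false := by
  obtain ⟨d, hd, rfl⟩ := exists_mem_kingDirs_shift_eq huv
  rw [← Bool.not_eq_true]
  intro hv
  rw [← shift_zero u] at hu
  obtain ⟨P, hP, hPcard, hPblue⟩ := exists_blue_triple_of_torusMajStep hu
  obtain ⟨Q, hQ, hQcard, hQblue⟩ := exists_blue_triple_of_torusMajStep hv
  obtain ⟨x, hxQ, hxP, p, hpP, hpx⟩ :=
    exists_adj_of_subset_vnBall_of_mem_kingDirs d hd P hP Q hQ hPcard hQcard
  have hcard : #(insert x P) = 4 := by rw [card_insert_of_notMem hxP, hPcard]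
  refine h (hcard ▸ hasBlueClusterOfSize_card_of_shift hn (u := u) ?_ ?_ ?_)
  · simp only [mem_insert, forall_eq_or_imp]
    exact ⟨natAbs_le_two_of_mem_vnBall d (mem_insert_of_mem hd) x (hQ hxQ),
      fun y hy => natAbs_le_two_of_mem_vnBall 0 (mem_insert_self _ _) y (hP hy)⟩
  · rw [coe_insert]
    exact (connected_of_subset_vnBall_zero hP hPcard).induce_insert hpP hpx
  · simp only [mem_insert, forall_eq_or_imp]
    exact ⟨hQblue x hxQ, hPblue⟩

theorem torusMajStep_eq_false_of_forall_mooreGraph_adj (hn : 5 ≤ n) {g : ZMod n × ZMod n → Bool}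
    (h : ∀ u v, (mooreGraph n).Adj u v → g u = true → g v = false) (w : ZMod n × ZMod n) :
    torusMajStep n g w = false := by
  rw [← Bool.not_eq_true]
  intro hw
  rw [← shift_zero w] at hw
  obtain ⟨P, hP, hPcard, hPblue⟩ := exists_blue_triple_of_torusMajStep hw
  obtain ⟨a, ha, hadj⟩ := exists_adj_forall_of_subset_vnBall_zero P hP hPcard
  obtain ⟨b, hb, hba⟩ := exists_mem_ne (s := P) (by omega) a
  have hwin : ∀ x ∈ P, x.1.natAbs ≤ 2 ∧ x.2.natAbs ≤ 2 := fun x hx =>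
    natAbs_le_two_of_mem_vnBall 0 (mem_insert_self _ _) x (hP hx)
  have := h _ _ (mooreGraph_adj_shift hn w (hwin a ha) (hwin b hb) (hadj b hb hba)) (hPblue a ha)
  simp [hPblue b hb] at this

end Torus

/-- In the majority model on the torus with von Neumann neighborhood (n ≥ 5): if the
largest blue cluster in generation `g_j` has size at most 3, then the largest blue
cluster in `g_{j+1}` has size at most 1, and `g_{j+2}` is entirely red. -/
theorem stmt11 (n : ℕ) (hn : 5 ≤ n) (g : ZMod n × ZMod n → Bool)
    (h : ¬ HasBlueClusterOfSize n g 4) :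
    ¬ HasBlueClusterOfSize n (torusMajStep n g) 2 ∧
      (∀ v, torusMajStep n (torusMajStep n g) v = false) := by
  have isolated : ∀ u v, (mooreGraph n).Adj u v → torusMajStep n g u = true →
      torusMajStep n g v = false := fun _ _ => torusMajStep_eq_false_of_mooreGraph_adj hn h
  refine ⟨fun h2 => ?_, torusMajStep_eq_false_of_forall_mooreGraph_adj hn isolated⟩
  obtain ⟨u, v, huv, hu, hv⟩ := exists_adj_of_hasBlueClusterOfSize_two h2
  simp [isolated u v huv hu] at hv
end

section
/- In the biased majority model on the torus T_{n,n} with von Neumann neighborhood, the diagonal pair {(i,j), (i+1 mod n, j+1 mod n)} is a b-eternal set: if both its cells are blue in some generation, then every subsequent generation contains at least one blue cell. -/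
/-!
If two opposite corners of a 2×2 block of the torus are blue, each of the other two corners has
both of them among its four neighbours, so it is blue in the next generation. Hence "some 2×2
block has a blue diagonal" is invariant under the biased majority step, and blue never dies out.
-/

def HasBlueDiagonalPair (n : ℕ) (g : ZMod n × ZMod n → Bool) : Prop :=
  ∃ a b : ZMod n, (g (a, b) = true ∧ g (a + 1, b + 1) = true) ∨
    (g (a + 1, b) = true ∧ g (a, b + 1) = true)

section

variable {n : ℕ} {g : ZMod n × ZMod n → Bool} {a b : ZMod n}

lemma torusBMajStep_of_diagonal (h₁ : g (a, b) = true) (h₂ : g (a + 1, b + 1) = true) :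
    torusBMajStep n g (a + 1, b) = true ∧ torusBMajStep n g (a, b + 1) = true := by
  constructor <;>
  · simp only [torusBMajStep, vnCount, add_sub_cancel_right, decide_eq_true_eq, h₁, h₂, if_true]
    split_ifs <;> omega

lemma torusBMajStep_of_antidiagonal (h₁ : g (a + 1, b) = true) (h₂ : g (a, b + 1) = true) :
    torusBMajStep n g (a, b) = true ∧ torusBMajStep n g (a + 1, b + 1) = true := by
  constructor <;>
  · simp only [torusBMajStep, vnCount, add_sub_cancel_right, decide_eq_true_eq, h₁, h₂, if_true]
    split_ifs <;> omega

lemma hasBlueDiagonalPair_torusBMajStep (h : HasBlueDiagonalPair n g) :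
    HasBlueDiagonalPair n (torusBMajStep n g) := by
  obtain ⟨a, b, ⟨h₁, h₂⟩ | ⟨h₁, h₂⟩⟩ := h
  · exact ⟨a, b, Or.inr (torusBMajStep_of_diagonal h₁ h₂)⟩
  · exact ⟨a, b, Or.inl (torusBMajStep_of_antidiagonal h₁ h₂)⟩

lemma hasBlueDiagonalPair_iterate_torusBMajStep (h : HasBlueDiagonalPair n g) (t : ℕ) :
    HasBlueDiagonalPair n ((torusBMajStep n)^[t] g) :=
  Function.Iterate.rec (HasBlueDiagonalPair n) h (fun _ ↦ hasBlueDiagonalPair_torusBMajStep) t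

lemma HasBlueDiagonalPair.exists_eq_true (h : HasBlueDiagonalPair n g) : ∃ v, g v = true := by
  obtain ⟨a, b, ⟨h₁, -⟩ | ⟨h₁, -⟩⟩ := h <;> exact ⟨_, h₁⟩

end

theorem stmt14_general (n : ℕ) (i j : ZMod n) (g : ZMod n × ZMod n → Bool)
    (h1 : g (i, j) = true) (h2 : g (i + 1, j + 1) = true) (t : ℕ) :
    ∃ v, (torusBMajStep n)^[t] g v = true :=
  (hasBlueDiagonalPair_iterate_torusBMajStep ⟨i, j, Or.inl ⟨h1, h2⟩⟩ t).exists_eq_true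

/-- In the biased majority model on the torus with von Neumann neighborhood (n ≥ 3),
the diagonal pair `{(i,j), (i+1,j+1)}` is b-eternal: if both its cells are blue, then
every subsequent generation contains at least one blue cell. -/
theorem stmt14 (n : ℕ) (hn : 3 ≤ n) (i j : ZMod n) (g : ZMod n × ZMod n → Bool)
    (h1 : g (i, j) = true) (h2 : g (i + 1, j + 1) = true) (t : ℕ) :
    ∃ v, (torusBMajStep n)^[t] g v = true :=
  stmt14_general n i j g h1 h2 t
end
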